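/- arXiv:1607.00868 — 6 statements merged into one kernel-verified Lean document; each statement's English description precedes it below -/
import Mathlib

section
/- Let K ≥ 1, n ≥ K+1 be integers and s ∈ [0,1]. Under the random pruning-edge model, the expectation of |Z| equals the sum over v = K+1, …, n of (1-s)^{(v-K-1)(n-v+1)}. -/
open MeasureTheory

/-- Potential pruning edges: pairs `(u,w)` with `1 ≤ u` and `u + K < w ≤ n`. -/
abbrev EdgeIdx (K n : ℕ) : Type :=
  {p : Fin (n + 1) × Fin (n + 1) // 1 ≤ (p.1 : ℕ) ∧ (p.1 : ℕ) + K < (p.2 : ℕ)}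

/-- The pruning edge `e` covers the vertex `v` if `u + K < v ≤ w`. -/
def covers {K n : ℕ} (e : EdgeIdx K n) (v : ℕ) : Prop :=
  (e.1.1 : ℕ) + K < v ∧ v ≤ (e.1.2 : ℕ)

instance {K n : ℕ} (e : EdgeIdx K n) (v : ℕ) : Decidable (covers e v) := by
  unfold covers; infer_instance

/-- The set `Z(ω)` of vertices `v ∈ {K+1, …, n}` covered by no present pruning edge. -/
def Zset (K n : ℕ) (ω : EdgeIdx K n → Bool) : Finset ℕ :=
  (Finset.Icc (K + 1) n).filter fun v => ∀ e : EdgeIdx K n, ω e = true → ¬ covers e v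

/-- The product probability measure on outcomes `ω : EdgeIdx K n → Bool`, where each
potential pruning edge is independently present with probability `s` (for `s ∈ [0,1]`;
the parameter is clamped to `[0,1]`, which is the identity for such `s`). -/
noncomputable def prunMeasure (K n : ℕ) (s : ℝ) : Measure (EdgeIdx K n → Bool) :=
  Measure.pi fun _ =>
    (PMF.bernoulli (min (Real.toNNReal s) 1) (min_le_right _ _)).toMeasure

/-
By linearity of expectation, `E|Z|` is the sum over `v` of the probability that `v` is
uncovered, i.e. that all `(v-K-1)(n-v+1)` edges `(u,w)` with `1 ≤ u ≤ v-K-1` and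
`v ≤ w ≤ n` are absent; by independence this probability is `(1-s)^((v-K-1)(n-v+1))`.
-/

theorem MeasureTheory.integral_card_filter {Ω ι : Type*} [MeasurableSpace Ω]
    (μ : Measure Ω) [IsFiniteMeasure μ] (s : Finset ι) (P : ι → Ω → Prop)
    [∀ i ω, Decidable (P i ω)] (hP : ∀ i, MeasurableSet {ω | P i ω}) :
    ∫ ω, ((s.filter fun i => P i ω).card : ℝ) ∂μ = ∑ i ∈ s, μ.real {ω | P i ω} := by
  have hcard : ∀ ω, ((s.filter fun i => P i ω).card : ℝ)
      = ∑ i ∈ s, {ω | P i ω}.indicator (fun _ => (1 : ℝ)) ω := by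
    intro ω
    rw [Finset.card_filter, Nat.cast_sum]
    exact Finset.sum_congr rfl fun i _ => by simp [Set.indicator_apply]
  simp_rw [hcard]
  rw [integral_finset_sum s fun i _ => (integrable_const (1 : ℝ)).indicator (hP i)]
  exact Finset.sum_congr rfl fun i _ => integral_indicator_one (hP i)

theorem MeasureTheory.Measure.pi_forall_mem_finset {ι α : Type*} [Fintype ι]
    [MeasurableSpace α] (ν : Measure α) [IsProbabilityMeasure ν] (S : Finset ι)
    (A : Set α) :
    Measure.pi (fun _ : ι => ν) {ω | ∀ i ∈ S, ω i ∈ A} = ν A ^ S.card := by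
  classical
  have hpi : {ω : ι → α | ∀ i ∈ S, ω i ∈ A}
      = Set.univ.pi fun i => if i ∈ S then A else Set.univ := by
    ext ω
    simp only [Set.mem_setOf_eq, Set.mem_univ_pi]
    refine forall_congr' fun i => ?_
    split_ifs <;> simp [*]
  rw [hpi, Measure.pi_pi]
  simp_rw [apply_ite ν, measure_univ]
  rw [Finset.prod_ite_mem, Finset.univ_inter, Finset.prod_const]

theorem PMF.toMeasure_bernoulli_false (p : NNReal) (hp : p ≤ 1) :
    (PMF.bernoulli p hp).toMeasure {false} = 1 - p := by
  rw [PMF.toMeasure_apply_singleton _ _ (measurableSet_singleton _), PMF.bernoulli_apply]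
  rfl

def coveringEdges (K n v : ℕ) : Finset (EdgeIdx K n) :=
  Finset.univ.filter fun e => covers e v

theorem mem_coveringEdges {K n v : ℕ} {e : EdgeIdx K n} :
    e ∈ coveringEdges K n v ↔ covers e v :=
  Finset.mem_filter_univ e

theorem card_coveringEdges {K n v : ℕ} (hKv : K + 1 ≤ v) (hvn : v ≤ n) :
    (coveringEdges K n v).card = (v - K - 1) * (n - v + 1) := by
  have hbij : (coveringEdges K n v).card
      = (Finset.Icc 1 (v - K - 1) ×ˢ Finset.Icc v n).card := by
    refine Finset.card_bij' (fun e _ => ((e.1.1 : ℕ), (e.1.2 : ℕ)))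
      (fun p hp => ⟨(⟨p.1, ?_⟩, ⟨p.2, ?_⟩), ?_⟩) ?_ ?_ (fun _ _ => rfl) (fun _ _ => rfl)
    all_goals simp only [mem_coveringEdges, covers, Finset.mem_product, Finset.mem_Icc] at *
    · omega
    · omega
    · simp only [Finset.mem_product, Finset.mem_Icc] at hp
      omega
    · intro e he
      have := e.2.1
      omega
    · intro p hp
      omega
  rw [hbij, Finset.card_product, Nat.card_Icc, Nat.card_Icc]
  congr 1
  omega

theorem forall_not_covers_iff {K n : ℕ} (ω : EdgeIdx K n → Bool) (v : ℕ) :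
    (∀ e : EdgeIdx K n, ω e = true → ¬ covers e v)
      ↔ ∀ e ∈ coveringEdges K n v, ω e ∈ ({false} : Set Bool) := by
  simp only [mem_coveringEdges, Set.mem_singleton_iff]
  exact forall_congr' fun e => by rw [imp_not_comm, Bool.not_eq_true]

theorem stmt2_general (K n : ℕ)
    (s : ℝ) (hs0 : 0 ≤ s) (hs1 : s ≤ 1) :
    ∫ ω, ((Zset K n ω).card : ℝ) ∂(prunMeasure K n s)
      = ∑ v ∈ Finset.Icc (K + 1) n, (1 - s) ^ ((v - K - 1) * (n - v + 1)) := by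
  have hq : (1 - ((min (Real.toNNReal s) 1 : NNReal) : ENNReal)).toReal = 1 - s := by
    rw [min_eq_left (Real.toNNReal_le_one.mpr hs1),
      ENNReal.toReal_sub_of_le (by simpa using hs1) ENNReal.one_ne_top]
    simp [hs0]
  have : IsProbabilityMeasure (prunMeasure K n s) := by
    unfold prunMeasure; infer_instance
  unfold Zset
  rw [integral_card_filter _ _ _ fun v => (Set.toFinite _).measurableSet]
  refine Finset.sum_congr rfl fun v hv => ?_
  obtain ⟨hKv, hvn⟩ := Finset.mem_Icc.mp hv
  simp_rw [measureReal_def, forall_not_covers_iff, prunMeasure, Measure.pi_forall_mem_finset,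
    PMF.toMeasure_bernoulli_false, ENNReal.toReal_pow, hq, card_coveringEdges hKv hvn]

/-- The expectation of `|Z|` equals `∑_{v=K+1}^n (1-s)^((v-K-1)(n-v+1))`. -/
theorem stmt2 (K n : ℕ) (hK : 1 ≤ K) (hn : K + 1 ≤ n)
    (s : ℝ) (hs0 : 0 ≤ s) (hs1 : s ≤ 1) :
    ∫ ω, ((Zset K n ω).card : ℝ) ∂(prunMeasure K n s)
      = ∑ v ∈ Finset.Icc (K + 1) n, (1 - s) ^ ((v - K - 1) * (n - v + 1)) :=
  stmt2_general K n s hs0 hs1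
end

section
/- Let K ≥ 1 and n ≥ K+1 be integers and let v₁ < v₂ be integers with K+1 ≤ v₁ < v₂ ≤ n. Then the number of pairs (u,w) of integers with 1 ≤ u, u+K < w ≤ n, such that u+K < v₁ ≤ w or u+K < v₂ ≤ w, equals (v₁-K-1)(n-v₁+1) + (v₂-v₁)(n-v₂+1). -/
/-- For `K+1 ≤ v₁ < v₂ ≤ n`, the number of potential pruning edges `(u,w)`
(i.e. `1 ≤ u`, `u + K < w ≤ n`) covering `v₁` or `v₂` equals
`(v₁-K-1)(n-v₁+1) + (v₂-v₁)(n-v₂+1)`. -/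
theorem stmt4 (K n v₁ v₂ : ℕ) (hK : 1 ≤ K) (hn : K + 1 ≤ n)
    (hv1 : K + 1 ≤ v₁) (hv12 : v₁ < v₂) (hv2 : v₂ ≤ n) :
    (((Finset.Icc 1 n) ×ˢ (Finset.Icc 1 n)).filter
        (fun p : ℕ × ℕ =>
          1 ≤ p.1 ∧ p.1 + K < p.2 ∧ p.2 ≤ n ∧
            ((p.1 + K < v₁ ∧ v₁ ≤ p.2) ∨ (p.1 + K < v₂ ∧ v₂ ≤ p.2)))).card
      = (v₁ - K - 1) * (n - v₁ + 1) + (v₂ - v₁) * (n - v₂ + 1) := by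
  set A := (Finset.Icc 1 (v₁ - K - 1)) ×ˢ (Finset.Icc v₁ n) with hA
  set B := (Finset.Icc 1 (v₂ - K - 1)) ×ˢ (Finset.Icc v₂ n) with hB
  have hset : (((Finset.Icc 1 n) ×ˢ (Finset.Icc 1 n)).filter
        (fun p : ℕ × ℕ =>
          1 ≤ p.1 ∧ p.1 + K < p.2 ∧ p.2 ≤ n ∧
            ((p.1 + K < v₁ ∧ v₁ ≤ p.2) ∨ (p.1 + K < v₂ ∧ v₂ ≤ p.2)))) = A ∪ B := by
    ext ⟨u, w⟩
    simp only [hA, hB, Finset.mem_filter, Finset.mem_product, Finset.mem_Icc,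
      Finset.mem_union]
    omega
  have hinter : A ∩ B = (Finset.Icc 1 (v₁ - K - 1)) ×ˢ (Finset.Icc v₂ n) := by
    ext ⟨u, w⟩
    simp only [hA, hB, Finset.mem_inter, Finset.mem_product, Finset.mem_Icc]
    omega
  have hcardA : A.card = (v₁ - K - 1) * (n - v₁ + 1) := by
    rw [hA, Finset.card_product, Nat.card_Icc, Nat.card_Icc]
    congr 1 <;> omega
  have hcardB : B.card = ((v₂ - v₁) + (v₁ - K - 1)) * (n - v₂ + 1) := by
    rw [hB, Finset.card_product, Nat.card_Icc, Nat.card_Icc]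
    congr 1 <;> omega
  have hcardI : (A ∩ B).card = (v₁ - K - 1) * (n - v₂ + 1) := by
    rw [hinter, Finset.card_product, Nat.card_Icc, Nat.card_Icc]
    congr 1 <;> omega
  have key := Finset.card_union_add_card_inter A B
  rw [hcardA, hcardB, hcardI, Nat.add_mul] at key
  rw [hset]
  omega
end

section
/- Let K ≥ 1, n ≥ K+1 be integers, s ∈ [0,1], and let v₁ < v₂ be integers with K+1 ≤ v₁ < v₂ ≤ n. Under the random pruning-edge model, the probability that both v₁ ∈ Z and v₂ ∈ Z equals (1-s)^{(v₁-K-1)(n-v₁+1) + (v₂-v₁)(n-v₂+1)}. -/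
/-!
The event says that every edge covering `v₁` or `v₂` is absent, so by independence its
probability is `(1 - s)` to the number of such edges. An edge `(u, w)` covers `v₂` iff
`u ∈ [1, v₂ - K - 1]` and `w ∈ [v₂, n]`, and covers `v₁` but not `v₂` iff
`u ∈ [1, v₁ - K - 1]` and `w ∈ [v₁, v₂ - 1]`; the two disjoint rectangles give the exponent.
-/

open MeasureTheory

open Finset

theorem MeasureTheory.Measure.pi_setOf_forall_imp_mem {ι α : Type*} [Fintype ι]
    [MeasurableSpace α] (μ : Measure α) [IsProbabilityMeasure μ]
    (p : ι → Prop) [DecidablePred p] (A : Set α) :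
    Measure.pi (fun _ : ι => μ) {ω | ∀ i, p i → ω i ∈ A} = μ A ^ #{i | p i} := by
  have hset : {ω : ι → α | ∀ i, p i → ω i ∈ A} =
      Set.univ.pi fun i => if p i then A else Set.univ := by
    ext ω
    simp only [Set.mem_ofPred_eq, Set.mem_pi, Set.mem_univ, true_imp_iff]
    refine forall_congr' fun i => ?_
    split_ifs with hi <;> simp [hi]
  rw [hset, Measure.pi_pi]
  simp only [apply_ite μ, measure_univ]
  rw [prod_ite, prod_const_one, mul_one, prod_const]

theorem PMF.toMeasure_bernoulli_false_s5 (s : ℝ) (hs : 0 ≤ s) :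
    (PMF.bernoulli (min s.toNNReal 1) (min_le_right _ _)).toMeasure {false} =
      ENNReal.ofReal (1 - s) := by
  rw [PMF.toMeasure_apply_singleton _ _ (measurableSet_singleton _), PMF.bernoulli_apply,
    Bool.cond_false]
  rcases le_total s 1 with h1 | h1
  · rw [min_eq_left (Real.toNNReal_le_one.2 h1), ENNReal.ofReal_sub _ hs, ENNReal.ofReal_one,
      ENNReal.coe_sub, ENNReal.coe_one]
    rfl
  · rw [min_eq_right (Real.one_le_toNNReal.2 h1), tsub_self,
      ENNReal.ofReal_of_nonpos (by linarith)]
    rfl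

namespace EdgeIdx

variable {K n : ℕ}

theorem card_filter (q : ℕ → ℕ → Prop) [∀ a b, Decidable (q a b)] :
    #{e : EdgeIdx K n | q e.1.1 e.1.2} =
      #{x ∈ Icc 1 n ×ˢ Icc 0 n | x.1 + K < x.2 ∧ q x.1 x.2} := by
  refine card_bij (fun e _ => ((e.1.1 : ℕ), (e.1.2 : ℕ))) ?_ ?_ ?_
  · rintro ⟨⟨u, w⟩, hu, huw⟩ he
    simp only [mem_filter, mem_univ, true_and] at he
    simp only [mem_filter, mem_product, mem_Icc]
    exact ⟨⟨⟨hu, by omega⟩, Nat.zero_le _, Nat.lt_succ_iff.1 w.isLt⟩, huw, he⟩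
  · rintro ⟨⟨u, w⟩, _⟩ _ ⟨⟨u', w'⟩, _⟩ _ h
    simp only [Prod.mk.injEq, Fin.val_inj] at h
    simp [h]
  · rintro ⟨u, w⟩ h
    simp only [mem_filter, mem_product, mem_Icc] at h
    exact ⟨⟨(⟨u, by omega⟩, ⟨w, by omega⟩), h.1.1.1, h.2.1⟩, by simpa using h.2.2, rfl⟩

theorem card_covers_or {v₁ v₂ : ℕ} (hv₁ : K + 1 ≤ v₁) (hv₁₂ : v₁ < v₂) (hv₂ : v₂ ≤ n) :
    #{e : EdgeIdx K n | covers e v₁ ∨ covers e v₂} =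
      (v₁ - K - 1) * (n - v₁ + 1) + (v₂ - v₁) * (n - v₂ + 1) := by
  have hrect : {x ∈ Icc 1 n ×ˢ Icc 0 n |
        x.1 + K < x.2 ∧ (x.1 + K < v₁ ∧ v₁ ≤ x.2 ∨ x.1 + K < v₂ ∧ v₂ ≤ x.2)} =
      Icc 1 (v₂ - K - 1) ×ˢ Icc v₂ n ∪ Icc 1 (v₁ - K - 1) ×ˢ Icc v₁ (v₂ - 1) := by
    ext ⟨u, w⟩
    simp only [mem_filter, mem_union, mem_product, mem_Icc]
    omega
  have hdisj :
      Disjoint (Icc 1 (v₂ - K - 1) ×ˢ Icc v₂ n) (Icc 1 (v₁ - K - 1) ×ˢ Icc v₁ (v₂ - 1)) :=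
    disjoint_product.2 <| Or.inr <| disjoint_left.2 fun _ h h' => by
      simp only [mem_Icc] at h h'
      omega
  rw [show #{e : EdgeIdx K n | covers e v₁ ∨ covers e v₂} = _ from
      card_filter fun u w => u + K < v₁ ∧ v₁ ≤ w ∨ u + K < v₂ ∧ v₂ ≤ w, hrect,
    card_union_of_disjoint hdisj, card_product, card_product, Nat.card_Icc, Nat.card_Icc,
    Nat.card_Icc, Nat.card_Icc]
  rw [show v₂ - K - 1 + 1 - 1 = (v₁ - K - 1) + (v₂ - v₁) by omega,
    show v₁ - K - 1 + 1 - 1 = v₁ - K - 1 by omega, show v₂ - 1 + 1 - v₁ = v₂ - v₁ by omega,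
    show n + 1 - v₂ = n - v₂ + 1 by omega, show n - v₁ + 1 = (v₂ - v₁) + (n - v₂ + 1) by omega]
  ring

end EdgeIdx

theorem setOf_not_covers_and_not_covers (K n v₁ v₂ : ℕ) :
    {ω : EdgeIdx K n → Bool |
        (∀ e, ω e = true → ¬ covers e v₁) ∧ (∀ e, ω e = true → ¬ covers e v₂)} =
      {ω | ∀ e, (covers e v₁ ∨ covers e v₂) → ω e ∈ ({false} : Set Bool)} := by
  ext ω
  simp only [Set.mem_ofPred_eq, Set.mem_singleton_iff, ← forall_and]
  refine forall_congr' fun e => ?_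
  cases ω e <;> simp [not_or]

theorem stmt5_general (K n v₁ v₂ : ℕ)
    (s : ℝ) (hs0 : 0 ≤ s) (hs1 : s ≤ 1)
    (hv1 : K + 1 ≤ v₁) (hv12 : v₁ < v₂) (hv2 : v₂ ≤ n) :
    prunMeasure K n s
        {ω | (∀ e : EdgeIdx K n, ω e = true → ¬ covers e v₁) ∧
             (∀ e : EdgeIdx K n, ω e = true → ¬ covers e v₂)}
      = ENNReal.ofReal
          ((1 - s) ^ ((v₁ - K - 1) * (n - v₁ + 1) + (v₂ - v₁) * (n - v₂ + 1))) := by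
  rw [setOf_not_covers_and_not_covers, prunMeasure, Measure.pi_setOf_forall_imp_mem,
    PMF.toMeasure_bernoulli_false_s5 s hs0, EdgeIdx.card_covers_or hv1 hv12 hv2,
    ENNReal.ofReal_pow (sub_nonneg.2 hs1)]

/-- The probability that two vertices `v₁ < v₂` both belong to `Z` equals
`(1-s)^((v₁-K-1)(n-v₁+1) + (v₂-v₁)(n-v₂+1))`. -/
theorem stmt5 (K n v₁ v₂ : ℕ) (hK : 1 ≤ K) (hn : K + 1 ≤ n)
    (s : ℝ) (hs0 : 0 ≤ s) (hs1 : s ≤ 1)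
    (hv1 : K + 1 ≤ v₁) (hv12 : v₁ < v₂) (hv2 : v₂ ≤ n) :
    prunMeasure K n s
        {ω | (∀ e : EdgeIdx K n, ω e = true → ¬ covers e v₁) ∧
             (∀ e : EdgeIdx K n, ω e = true → ¬ covers e v₂)}
      = ENNReal.ofReal
          ((1 - s) ^ ((v₁ - K - 1) * (n - v₁ + 1) + (v₂ - v₁) * (n - v₂ + 1))) :=
  stmt5_general K n v₁ v₂ s hs0 hs1 hv1 hv12 hv2
end

section
/- For every real s with 0 < s < 1 and every integer k ≥ 1, the sum Σ_{i=1}^{k-1} (1-s)^{i(k-i)} is strictly less than 2(1-s)^{k-1}/s. -/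
/-!
Put `q = 1 - s` and write the exponent as `(a + 1) * (b + 1)` with `a + b + 1 = k - 1`.
Since `min a b ≤ a * b`, this exponent is at least `(k - 1) + min a b`, so each term is at most
`q ^ (k - 1) * (q ^ a + q ^ b)`. Summing over `a`, both halves give the same geometric sum
`q ^ (k - 1) * ∑_{a < k - 1} q ^ a < q ^ (k - 1) / (1 - q)`.
-/

open Finset

theorem Nat.min_le_mul (a b : ℕ) : min a b ≤ a * b := by
  rcases Nat.eq_zero_or_pos b with rfl | hb
  · simp
  · exact (min_le_left a b).trans (Nat.le_mul_of_pos_right a hb)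

theorem Finset.sum_Icc_one_eq_sum_range {M : Type*} [AddCommMonoid M] (f : ℕ → M) (n : ℕ) :
    ∑ i ∈ Icc 1 n, f i = ∑ a ∈ range n, f (a + 1) := by
  rw [range_eq_Ico, sum_Ico_add']
  rfl

variable {K : Type*} [Field K] [LinearOrder K] [IsStrictOrderedRing K]

theorem geom_sum_lt_inv_one_sub {q : K} (hq0 : 0 < q) (hq1 : q < 1) (n : ℕ) :
    ∑ i ∈ range n, q ^ i < (1 - q)⁻¹ := by
  rw [← one_div, lt_div_iff₀ (sub_pos.2 hq1), geom_sum_mul_neg]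
  exact sub_lt_self 1 (pow_pos hq0 n)

theorem pow_succ_mul_succ_le {q : K} (hq0 : 0 ≤ q) (hq1 : q ≤ 1) (a b : ℕ) :
    q ^ ((a + 1) * (b + 1)) ≤ q ^ (a + b + 1) * (q ^ a + q ^ b) := by
  calc q ^ ((a + 1) * (b + 1)) ≤ q ^ (a + b + 1 + min a b) :=
        pow_le_pow_of_le_one hq0 hq1 (by nlinarith [Nat.min_le_mul a b])
    _ = q ^ (a + b + 1) * max (q ^ a) (q ^ b) := by
        rw [pow_add, (pow_right_anti₀ hq0 hq1).map_min]
    _ ≤ q ^ (a + b + 1) * (q ^ a + q ^ b) := by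
        gcongr
        exact max_le_add_of_nonneg (by positivity) (by positivity)

theorem sum_Icc_pow_mul_sub_lt {q : K} (hq0 : 0 < q) (hq1 : q < 1) (n : ℕ) :
    ∑ i ∈ Icc 1 n, q ^ (i * (n + 1 - i)) < 2 * q ^ n / (1 - q) := by
  have hterm : ∀ a ∈ range n,
      q ^ ((a + 1) * (n + 1 - (a + 1))) ≤ q ^ n * (q ^ a + q ^ (n - 1 - a)) := by
    intro a ha
    obtain ⟨b, rfl⟩ : ∃ b, n = a + b + 1 := ⟨n - 1 - a, by grind⟩
    rw [show a + b + 1 + 1 - (a + 1) = b + 1 by omega, show a + b + 1 - 1 - a = b by omega]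
    exact pow_succ_mul_succ_le hq0.le hq1.le a b
  calc ∑ i ∈ Icc 1 n, q ^ (i * (n + 1 - i))
      ≤ ∑ a ∈ range n, q ^ n * (q ^ a + q ^ (n - 1 - a)) := by
        rw [sum_Icc_one_eq_sum_range]
        exact sum_le_sum hterm
    _ = 2 * q ^ n * ∑ a ∈ range n, q ^ a := by
        rw [← mul_sum, sum_add_distrib, sum_range_reflect (q ^ ·) n]
        ring
    _ < 2 * q ^ n * (1 - q)⁻¹ :=
        mul_lt_mul_of_pos_left (geom_sum_lt_inv_one_sub hq0 hq1 n) (by positivity)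
    _ = 2 * q ^ n / (1 - q) := (div_eq_mul_inv _ _).symm

/-- For `0 < s < 1` and `k ≥ 1`, `∑_{i=1}^{k-1} (1-s)^{i(k-i)} < 2(1-s)^{k-1}/s`. -/
theorem stmt8 (s : ℝ) (hs0 : 0 < s) (hs1 : s < 1) (k : ℕ) (hk : 1 ≤ k) :
    ∑ i ∈ Finset.Icc 1 (k - 1), (1 - s) ^ (i * (k - i))
      < 2 * (1 - s) ^ (k - 1) / s := by
  obtain ⟨n, rfl⟩ := Nat.exists_eq_add_of_le' hk
  simpa using sum_Icc_pow_mul_sub_lt (q := 1 - s) (by linarith) (by linarith) n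
end

section
/- For every real s with 0 < s < 1 and all integers n, K with n ≥ K+1 and K ≥ 1, the sum Σ_{i=2}^{n-K} (1-s)^{i(n-K-i+1)} is strictly less than (2/s − 1)(1-s)^{n-K}. -/
/-!
With `q = 1 - s` and `m = n - K`, every exponent `i (m - i + 1)` with `2 ≤ i ≤ m` is at least
`m + (m - i)`, so the sum is at most `q ^ m` times a partial geometric series in `q`, hence at most
`q ^ m / s`; and `1 / s < 2 / s - 1` because `s < 1`.
-/

open Finset

theorem add_sub_le_mul_sub_add_one {i m : ℕ} (hi : 2 ≤ i) (him : i ≤ m) :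
    m + (m - i) ≤ i * (m - i + 1) := by
  obtain ⟨j, rfl⟩ := Nat.exists_eq_add_of_le him
  have : 2 * j ≤ i * j := Nat.mul_le_mul_right j hi
  simp only [Nat.add_sub_cancel_left]
  nlinarith

theorem sum_Icc_pow_sub_le {q : ℝ} (hq0 : 0 ≤ q) (hq1 : q < 1) (m : ℕ) :
    ∑ i ∈ Icc 2 m, q ^ (m - i) ≤ 1 / (1 - q) := by
  calc ∑ i ∈ Icc 2 m, q ^ (m - i)
      ≤ ∑ i ∈ range (m + 1), q ^ (m + 1 - 1 - i) := by
        refine sum_le_sum_of_subset_of_nonneg (fun i hi => ?_) fun _ _ _ => by positivity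
        simp only [mem_Icc, mem_range] at hi ⊢
        omega
    _ = ∑ i ∈ Ico 0 (m + 1), q ^ i := by rw [sum_range_reflect, range_eq_Ico]
    _ ≤ q ^ 0 / (1 - q) := geom_sum_Ico_le_of_lt_one hq0 hq1
    _ = 1 / (1 - q) := by rw [pow_zero]

theorem sum_Icc_pow_mul_sub_add_one_le {q : ℝ} (hq0 : 0 ≤ q) (hq1 : q < 1) (m : ℕ) :
    ∑ i ∈ Icc 2 m, q ^ (i * (m - i + 1)) ≤ q ^ m / (1 - q) := by
  calc ∑ i ∈ Icc 2 m, q ^ (i * (m - i + 1))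
      ≤ ∑ i ∈ Icc 2 m, q ^ m * q ^ (m - i) := by
        refine sum_le_sum fun i hi => ?_
        rw [mem_Icc] at hi
        rw [← pow_add]
        exact pow_le_pow_of_le_one hq0 hq1.le (add_sub_le_mul_sub_add_one hi.1 hi.2)
    _ = q ^ m * ∑ i ∈ Icc 2 m, q ^ (m - i) := (mul_sum ..).symm
    _ ≤ q ^ m * (1 / (1 - q)) := by gcongr; exact sum_Icc_pow_sub_le hq0 hq1 m
    _ = q ^ m / (1 - q) := mul_one_div ..

theorem stmt9_general (s : ℝ) (hs0 : 0 < s) (hs1 : s < 1) (n K : ℕ) :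
    ∑ i ∈ Finset.Icc 2 (n - K), (1 - s) ^ (i * (n - K - i + 1))
      < (2 / s - 1) * (1 - s) ^ (n - K) := by
  have hq : 0 < 1 - s := sub_pos.mpr hs1
  have hbound := sum_Icc_pow_mul_sub_add_one_le hq.le (sub_lt_self 1 hs0) (n - K)
  rw [sub_sub_cancel] at hbound
  have hcoeff : 1 / s < 2 / s - 1 := by
    rw [div_sub_one hs0.ne', div_lt_div_iff_of_pos_right hs0]
    linarith
  calc _ ≤ (1 - s) ^ (n - K) / s := hbound
    _ = 1 / s * (1 - s) ^ (n - K) := by rw [one_div_mul_eq_div]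
    _ < (2 / s - 1) * (1 - s) ^ (n - K) := by gcongr

/-- For `0 < s < 1`, `K ≥ 1` and `n ≥ K+1`,
`∑_{i=2}^{n-K} (1-s)^{i(n-K-i+1)} < (2/s − 1)(1-s)^{n-K}`. -/
theorem stmt9 (s : ℝ) (hs0 : 0 < s) (hs1 : s < 1) (n K : ℕ)
    (hK : 1 ≤ K) (hn : K + 1 ≤ n) :
    ∑ i ∈ Finset.Icc 2 (n - K), (1 - s) ^ (i * (n - K - i + 1))
      < (2 / s - 1) * (1 - s) ^ (n - K) :=
  stmt9_general s hs0 hs1 n K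
end

section
/- Let K ≥ 1 and n ≥ K+2 be integers and let s ∈ (0,1). Under the random pruning-edge model, the variance of |Z| satisfies 0 < Var(|Z|) < (8/s² − 2/s)·(1-s)^{n-K-1}. -/
open MeasureTheory

/-!
`Z(ω)` is the set of `v` whose cover set `S_v` (the edges `(u,w)` with `u + K < v ≤ w`) contains no
present edge. These events have probability `(1-s)^|S_v|`, and the events for `v` and `w` hold
together with probability `(1-s)^|S_v ∪ S_w|`, so `Var |Z|` is the sum over pairs of the
covariances `(1-s)^|S_v ∪ S_w| - (1-s)^(|S_v| + |S_w|) ≥ 0`; the diagonal term at `v = K + 2` is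
positive. Since `|S_v| = (v-K-1)(n+1-v)` and `|S_v ∩ S_w| = (v-K-1)(n+1-w)` for `v ≤ w`, one gets
`|S_v ∪ S_w| ≥ (n-K-1) + (w-K-2)(n-w) + (w-v)` for `K + 2 ≤ v ≤ w`, and two geometric series
bound the sum by `4 s⁻² (1-s)^(n-K-1)`.
-/

open Finset

section Moments

variable {Ω α : Type*} [MeasurableSpace Ω] {μ : Measure Ω} [IsFiniteMeasure μ]

theorem integral_sum_indicator_one (V : Finset α) {E : α → Set Ω}
    (hE : ∀ v, MeasurableSet (E v)) :
    ∫ ω, ∑ v ∈ V, (E v).indicator 1 ω ∂μ = ∑ v ∈ V, μ.real (E v) := by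
  rw [integral_finsetSum _ fun v _ => (integrable_const 1).indicator (hE v)]
  exact sum_congr rfl fun v _ => integral_indicator_one (hE v)

theorem integral_sum_indicator_one_sq (V : Finset α) {E : α → Set Ω}
    (hE : ∀ v, MeasurableSet (E v)) :
    ∫ ω, (∑ v ∈ V, (E v).indicator (1 : Ω → ℝ) ω) ^ 2 ∂μ
      = ∑ v ∈ V, ∑ w ∈ V, μ.real (E v ∩ E w) := by
  simp_rw [sq, sum_mul_sum, ← Pi.mul_apply (f := (E _).indicator 1), ← Set.inter_indicator_one]
  rw [integral_finsetSum _ fun v _ => integrable_finsetSum _ fun w _ =>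
    (integrable_const 1).indicator ((hE v).inter (hE w))]
  exact sum_congr rfl fun v _ => integral_sum_indicator_one V fun w => (hE v).inter (hE w)

end Moments

section Avoidance

variable {ι α : Type*}

def avoidSet (S : Finset ι) : Set (ι → Bool) := {ω | ∀ i ∈ S, ω i = false}

theorem measure_pi_avoidSet [Fintype ι] (P : PMF Bool) (S : Finset ι) :
    Measure.pi (fun _ : ι => P.toMeasure) (avoidSet S) = P false ^ #S := by
  classical
  have hpi : avoidSet S = Set.univ.pi fun i => if i ∈ S then {false} else Set.univ := by
    ext ω
    simp only [avoidSet, Set.mem_univ_pi]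
    refine forall_congr' fun i => ?_
    split_ifs with h <;> simp [h]
  rw [hpi, Measure.pi_pi]
  simp_rw [apply_ite (fun t => P.toMeasure t), measure_univ,
    PMF.toMeasure_apply_singleton _ _ (measurableSet_singleton _)]
  rw [prod_ite_mem, univ_inter, prod_const]

variable [DecidableEq ι]

theorem avoidSet_inter_avoidSet (A B : Finset ι) :
    avoidSet A ∩ avoidSet B = avoidSet (A ∪ B) := by
  ext ω
  simp [avoidSet, or_imp, forall_and]

-- The covariance of the indicators of `avoidSet A` and `avoidSet B` when
-- `μ.real (avoidSet S) = q ^ #S` for all `S`.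
def avoidCov (q : ℝ) (A B : Finset ι) : ℝ := q ^ #(A ∪ B) - q ^ (#A + #B)

theorem avoidCov_comm (q : ℝ) (A B : Finset ι) : avoidCov q A B = avoidCov q B A := by
  rw [avoidCov, avoidCov, union_comm, add_comm]

theorem avoidCov_nonneg {q : ℝ} (hq0 : 0 ≤ q) (hq1 : q ≤ 1) (A B : Finset ι) :
    0 ≤ avoidCov q A B :=
  sub_nonneg.2 (pow_le_pow_of_le_one hq0 hq1 (card_union_le A B))

theorem avoidCov_le_pow {q : ℝ} (hq0 : 0 ≤ q) (A B : Finset ι) :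
    avoidCov q A B ≤ q ^ #(A ∪ B) :=
  sub_le_self _ (pow_nonneg hq0 _)

theorem avoidCov_self_pos {q : ℝ} (hq0 : 0 < q) (hq1 : q < 1) {A : Finset ι} (hA : A.Nonempty) :
    0 < avoidCov q A A := by
  rw [avoidCov, union_self, sub_pos]
  exact pow_lt_pow_right_of_lt_one₀ hq0 hq1 (Nat.lt_add_of_pos_right hA.card_pos)

theorem avoidCov_empty_left (q : ℝ) (B : Finset ι) : avoidCov q ∅ B = 0 := by
  simp [avoidCov]

theorem sum_sum_avoidCov_insert_of_eq_empty [DecidableEq α] (q : ℝ) {S : α → Finset ι} {a : α}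
    {I : Finset α} (ha : S a = ∅) (haI : a ∉ I) :
    ∑ v ∈ insert a I, ∑ w ∈ insert a I, avoidCov q (S v) (S w)
      = ∑ v ∈ I, ∑ w ∈ I, avoidCov q (S v) (S w) := by
  simp [sum_insert haI, ha, avoidCov_empty_left, avoidCov_comm _ _ (∅ : Finset ι)]

theorem integral_sum_indicator_avoidSet_sq_sub_sq [Finite ι] {μ : Measure (ι → Bool)}
    [IsFiniteMeasure μ] {q : ℝ} (hμ : ∀ S : Finset ι, μ.real (avoidSet S) = q ^ #S)
    (V : Finset α) (S : α → Finset ι) :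
    ∫ ω, (∑ v ∈ V, (avoidSet (S v)).indicator (1 : (ι → Bool) → ℝ) ω) ^ 2 ∂μ
        - (∫ ω, ∑ v ∈ V, (avoidSet (S v)).indicator (1 : (ι → Bool) → ℝ) ω ∂μ) ^ 2
      = ∑ v ∈ V, ∑ w ∈ V, avoidCov q (S v) (S w) := by
  have hmeas : ∀ v, MeasurableSet (avoidSet (S v)) := fun _ => .of_discrete
  rw [integral_sum_indicator_one_sq V hmeas, integral_sum_indicator_one V hmeas, sq,
    sum_mul_sum, ← sum_sub_distrib]
  refine sum_congr rfl fun v _ => ?_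
  rw [← sum_sub_distrib]
  refine sum_congr rfl fun w _ => ?_
  rw [avoidSet_inter_avoidSet, hμ, hμ, hμ, avoidCov, pow_add]

end Avoidance

instance (K n : ℕ) (s : ℝ) : IsProbabilityMeasure (prunMeasure K n s) := by
  unfold prunMeasure; infer_instance

theorem prunMeasure_real_avoidSet {K n : ℕ} {s : ℝ} (hs0 : 0 ≤ s) (hs1 : s ≤ 1)
    (S : Finset (EdgeIdx K n)) : (prunMeasure K n s).real (avoidSet S) = (1 - s) ^ #S := by
  rw [measureReal_def, prunMeasure, measure_pi_avoidSet, ENNReal.toReal_pow]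
  congr 1
  show ((1 - min s.toNNReal 1 : NNReal) : ℝ) = 1 - s
  rw [min_eq_left (Real.toNNReal_le_one.2 hs1), NNReal.coe_sub (Real.toNNReal_le_one.2 hs1),
    Real.coe_toNNReal _ hs0, NNReal.coe_one]

section GeometricBounds
variable {q : ℝ}

theorem sum_pow_le_inv_one_sub_of_injOn {α : Type*} (hq0 : 0 ≤ q) (hq1 : q < 1) {s : Finset α}
    {f : α → ℕ} (hf : Set.InjOn f s) : ∑ a ∈ s, q ^ f a ≤ (1 - q)⁻¹ := by
  classical
  rw [← sum_image hf, ← tsum_geometric_of_lt_one hq0 hq1]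
  exact (summable_geometric_of_lt_one hq0 hq1).sum_le_tsum _ fun i _ => pow_nonneg hq0 i

theorem pow_mul_le_pow_add_pow (hq0 : 0 ≤ q) (hq1 : q ≤ 1) (x y : ℕ) :
    q ^ (x * y) ≤ q ^ x + q ^ y := by
  rcases Nat.eq_zero_or_pos y with rfl | hy
  · simpa using pow_nonneg hq0 x
  · exact (pow_le_pow_of_le_one hq0 hq1 (Nat.le_mul_of_pos_right x hy)).trans
      (le_add_of_nonneg_right (pow_nonneg hq0 y))

theorem sum_Icc_pow_mul_le (hq0 : 0 ≤ q) (hq1 : q < 1) (a b : ℕ) :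
    ∑ w ∈ Icc a b, q ^ ((w - a) * (b - w)) ≤ 2 * (1 - q)⁻¹ := by
  have hinj {f : ℕ → ℕ} (hf : ∀ x ∈ Icc a b, ∀ y ∈ Icc a b, f x = f y → x = y) :
      ∑ w ∈ Icc a b, q ^ f w ≤ (1 - q)⁻¹ :=
    sum_pow_le_inv_one_sub_of_injOn hq0 hq1 hf
  calc ∑ w ∈ Icc a b, q ^ ((w - a) * (b - w))
      ≤ ∑ w ∈ Icc a b, (q ^ (w - a) + q ^ (b - w)) :=
        sum_le_sum fun w _ => pow_mul_le_pow_add_pow hq0 hq1.le _ _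
    _ ≤ 2 * (1 - q)⁻¹ := by
        rw [sum_add_distrib, two_mul]
        gcongr <;> apply hinj <;> simp only [mem_Icc] <;> omega

end GeometricBounds

theorem sum_sum_le_two_mul_sum_sum_le {α : Type*} [LinearOrder α] {I : Finset α}
    {f g : α → α → ℝ} (hf : ∀ v w, f v w = f w v) (hg : ∀ v ∈ I, ∀ w ∈ I, 0 ≤ g v w)
    (hfg : ∀ v ∈ I, ∀ w ∈ I, v ≤ w → f v w ≤ g v w) :
    ∑ v ∈ I, ∑ w ∈ I, f v w ≤ 2 * ∑ w ∈ I, ∑ v ∈ I with v ≤ w, g v w := by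
  have hsplit : ∀ v ∈ I, ∀ w ∈ I,
      f v w ≤ (if v ≤ w then g v w else 0) + if w ≤ v then g w v else 0 := by
    intro v hv w hw
    rcases lt_trichotomy v w with h | rfl | h
    · simpa [h.le, h.not_ge] using hfg v hv w hw h.le
    · simpa using le_add_of_le_of_nonneg (hfg v hv v hv le_rfl) (hg v hv v hv)
    · simpa [h.le, h.not_ge, hf v w] using hfg w hw v hv h.le
  calc ∑ v ∈ I, ∑ w ∈ I, f v w
      ≤ ∑ v ∈ I, ∑ w ∈ I, ((if v ≤ w then g v w else 0) + if w ≤ v then g w v else 0) :=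
        sum_le_sum fun v hv => sum_le_sum fun w hw => hsplit v hv w hw
    _ = 2 * ∑ w ∈ I, ∑ v ∈ I with v ≤ w, g v w := by
        simp only [sum_add_distrib, ← sum_filter]
        rw [sum_comm' (t' := I) (s' := fun w => I.filter (· ≤ w)) (by aesop)]
        ring

section Coverage
variable {K n : ℕ}

def coverSet (K n v : ℕ) : Finset (EdgeIdx K n) := {e | covers e v}

theorem card_Zset_eq_sum_indicator (ω : EdgeIdx K n → Bool) :
    (#(Zset K n ω) : ℝ)
      = ∑ v ∈ Icc (K + 1) n, (avoidSet (coverSet K n v)).indicator 1 ω := by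
  rw [Zset, card_filter, Nat.cast_sum]
  refine sum_congr rfl fun v _ => ?_
  have hZ : (∀ e, ω e = true → ¬covers e v) ↔ ω ∈ avoidSet (coverSet K n v) := by
    simp only [avoidSet, coverSet, Set.mem_ofPred_eq, mem_filter, mem_univ, true_and]
    refine forall_congr' fun e => ?_
    cases ω e <;> simp
  by_cases h : ω ∈ avoidSet (coverSet K n v)
  · rw [Set.indicator_of_mem h, if_pos (hZ.2 h), Nat.cast_one, Pi.one_apply]
  · rw [Set.indicator_of_notMem h, if_neg (mt hZ.1 h), Nat.cast_zero]

theorem integral_card_Zset_sq_sub_sq {s : ℝ} (hs0 : 0 ≤ s) (hs1 : s ≤ 1) :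
    ∫ ω, (#(Zset K n ω) : ℝ) ^ 2 ∂(prunMeasure K n s)
        - (∫ ω, (#(Zset K n ω) : ℝ) ∂(prunMeasure K n s)) ^ 2
      = ∑ v ∈ Icc (K + 1) n, ∑ w ∈ Icc (K + 1) n,
          avoidCov (1 - s) (coverSet K n v) (coverSet K n w) := by
  simp only [card_Zset_eq_sum_indicator]
  exact integral_sum_indicator_avoidSet_sq_sub_sq (prunMeasure_real_avoidSet hs0 hs1) _ _

theorem card_filter_lt_le (x y : ℕ) (hxy : x ≤ y) :
    #{e : EdgeIdx K n | (e.1.1 : ℕ) + K < x ∧ y ≤ (e.1.2 : ℕ)} = (x - (K + 1)) * (n + 1 - y) := by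
  rw [show (x - (K + 1)) * (n + 1 - y) = #(Icc 1 (x - (K + 1)) ×ˢ Icc y n) by simp]
  refine card_nbij (fun e => ((e.1.1 : ℕ), (e.1.2 : ℕ))) ?_ ?_ ?_
  · intro e he
    have := e.1.2.isLt
    simp only [coe_filter, Set.mem_ofPred_eq, mem_univ, true_and] at he
    simp only [coe_product, coe_Icc, Set.mem_prod, Set.mem_Icc]
    omega
  · intro a _ b _ hab
    simp only [Prod.mk.injEq] at hab
    exact Subtype.ext (Prod.ext (Fin.ext hab.1) (Fin.ext hab.2))
  · rintro ⟨u, w⟩ h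
    simp only [coe_product, coe_Icc, Set.mem_prod, Set.mem_Icc] at h
    refine ⟨⟨(⟨u, by omega⟩, ⟨w, by omega⟩), by simp only; omega⟩, ?_, rfl⟩
    simp only [coe_filter, Set.mem_ofPred_eq, mem_univ, true_and]
    omega

theorem card_coverSet (v : ℕ) : #(coverSet K n v) = (v - (K + 1)) * (n + 1 - v) :=
  card_filter_lt_le v v le_rfl

theorem card_coverSet_inter {v w : ℕ} (hvw : v ≤ w) :
    #(coverSet K n v ∩ coverSet K n w) = (v - (K + 1)) * (n + 1 - w) := by
  rw [← card_filter_lt_le v w hvw]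
  congr 1
  ext e
  simp only [coverSet, mem_inter, mem_filter, mem_univ, true_and]
  unfold covers
  omega

theorem coverSet_succ_eq_empty : coverSet K n (K + 1) = ∅ := by
  simpa using card_coverSet (K := K) (n := n) (K + 1)

theorem card_coverSet_union_ge {v w : ℕ} (hv : K + 2 ≤ v) (hvw : v ≤ w) (hw : w ≤ n) :
    (n - K - 1) + (w - (K + 2)) * (n - w) + (w - v) ≤ #(coverSet K n v ∪ coverSet K n w) := by
  have hU := card_union_add_card_inter (coverSet K n v) (coverSet K n w)
  rw [card_coverSet, card_coverSet, card_coverSet_inter hvw] at hU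
  zify [hvw, hw, (by omega : K + 1 ≤ v), (by omega : K + 1 ≤ w), (by omega : K + 2 ≤ w),
    (by omega : v ≤ n + 1), (by omega : w ≤ n + 1), (by omega : K ≤ n),
    (by omega : 1 ≤ n - K)] at hU ⊢
  have hxy : (0 : ℤ) ≤ (v - (K + 2)) * (w - v) := by
    apply mul_nonneg <;> linarith [(Int.ofNat_le.2 hv), (Int.ofNat_le.2 hvw)]
  linarith

theorem avoidCov_coverSet_le {q : ℝ} (hq0 : 0 ≤ q) (hq1 : q ≤ 1) {v w : ℕ} (hv : K + 2 ≤ v)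
    (hvw : v ≤ w) (hw : w ≤ n) :
    avoidCov q (coverSet K n v) (coverSet K n w)
      ≤ q ^ (n - K - 1) * (q ^ ((w - (K + 2)) * (n - w)) * q ^ (w - v)) := by
  rw [← pow_add, ← pow_add, ← add_assoc]
  exact (avoidCov_le_pow hq0 _ _).trans
    (pow_le_pow_of_le_one hq0 hq1 (card_coverSet_union_ge hv hvw hw))

theorem sum_sum_avoidCov_coverSet_le {q : ℝ} (hq0 : 0 ≤ q) (hq1 : q < 1) :
    ∑ v ∈ Icc (K + 2) n, ∑ w ∈ Icc (K + 2) n, avoidCov q (coverSet K n v) (coverSet K n w)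
      ≤ 4 * (1 - q)⁻¹ ^ 2 * q ^ (n - K - 1) := by
  have hgeom (w : ℕ) : ∑ v ∈ Icc (K + 2) n with v ≤ w, q ^ (w - v) ≤ (1 - q)⁻¹ :=
    sum_pow_le_inv_one_sub_of_injOn hq0 hq1 fun x hx y hy hxy => by
      simp only [coe_filter, mem_Icc, Set.mem_ofPred_eq] at hx hy
      omega
  calc ∑ v ∈ Icc (K + 2) n, ∑ w ∈ Icc (K + 2) n, avoidCov q (coverSet K n v) (coverSet K n w)
      ≤ 2 * ∑ w ∈ Icc (K + 2) n, ∑ v ∈ Icc (K + 2) n with v ≤ w,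
          q ^ (n - K - 1) * (q ^ ((w - (K + 2)) * (n - w)) * q ^ (w - v)) :=
        sum_sum_le_two_mul_sum_sum_le (fun _ _ => avoidCov_comm _ _ _)
          (fun _ _ _ _ => by positivity) fun v hv w hw hvw =>
            avoidCov_coverSet_le hq0 hq1.le (mem_Icc.1 hv).1 hvw (mem_Icc.1 hw).2
    _ = 2 * q ^ (n - K - 1) * ∑ w ∈ Icc (K + 2) n,
          q ^ ((w - (K + 2)) * (n - w)) * ∑ v ∈ Icc (K + 2) n with v ≤ w, q ^ (w - v) := by
        simp only [mul_sum, mul_assoc]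
    _ ≤ 2 * q ^ (n - K - 1) * ∑ w ∈ Icc (K + 2) n, q ^ ((w - (K + 2)) * (n - w)) * (1 - q)⁻¹ := by
        gcongr with w; exact hgeom w
    _ ≤ 2 * q ^ (n - K - 1) * (2 * (1 - q)⁻¹ * (1 - q)⁻¹) := by
        rw [← sum_mul]
        gcongr
        exact sum_Icc_pow_mul_le hq0 hq1 _ _
    _ = 4 * (1 - q)⁻¹ ^ 2 * q ^ (n - K - 1) := by ring

theorem sum_sum_avoidCov_coverSet_pos {q : ℝ} (hq0 : 0 < q) (hq1 : q < 1) (hn : K + 2 ≤ n) :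
    0 < ∑ v ∈ Icc (K + 2) n, ∑ w ∈ Icc (K + 2) n, avoidCov q (coverSet K n v) (coverSet K n w) := by
  have hmem : K + 2 ∈ Icc (K + 2) n := mem_Icc.2 ⟨le_rfl, hn⟩
  have hne : (coverSet K n (K + 2)).Nonempty := by
    rw [← card_pos, card_coverSet]
    simp only [Nat.add_sub_add_left]
    omega
  have hnonneg (v w : ℕ) := avoidCov_nonneg hq0.le hq1.le (coverSet K n v) (coverSet K n w)
  exact sum_pos' (fun v _ => sum_nonneg fun w _ => hnonneg v w)
    ⟨K + 2, hmem, sum_pos' (fun w _ => hnonneg _ w) ⟨K + 2, hmem, avoidCov_self_pos hq0 hq1 hne⟩⟩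

end Coverage

theorem stmt10_general (K n : ℕ) (hn : K + 2 ≤ n)
    (s : ℝ) (hs0 : 0 < s) (hs1 : s < 1) :
    0 < (∫ ω, (((Zset K n ω).card : ℝ)) ^ 2 ∂(prunMeasure K n s))
          - (∫ ω, ((Zset K n ω).card : ℝ) ∂(prunMeasure K n s)) ^ 2 ∧
    (∫ ω, (((Zset K n ω).card : ℝ)) ^ 2 ∂(prunMeasure K n s))
          - (∫ ω, ((Zset K n ω).card : ℝ) ∂(prunMeasure K n s)) ^ 2
      < (8 / s ^ 2 - 2 / s) * (1 - s) ^ (n - K - 1) := by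
  rw [integral_card_Zset_sq_sub_sq hs0.le hs1.le, ← insert_Icc_add_one_left_eq_Icc (by omega),
    sum_sum_avoidCov_insert_of_eq_empty _ coverSet_succ_eq_empty (by simp)]
  have hq0 : 0 < 1 - s := sub_pos.2 hs1
  have hq1 : 1 - s < 1 := sub_lt_self 1 hs0
  refine ⟨sum_sum_avoidCov_coverSet_pos hq0 hq1 hn,
    (sum_sum_avoidCov_coverSet_le hq0.le hq1).trans_lt ?_⟩
  rw [sub_sub_cancel]
  have hs : 4 * s⁻¹ ^ 2 < 8 / s ^ 2 - 2 / s := by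
    field_simp
    linarith
  exact mul_lt_mul_of_pos_right hs (pow_pos hq0 _)

/-- For `n ≥ K+2` and `s ∈ (0,1)`, the variance of `|Z|` satisfies
`0 < Var(|Z|) < (8/s² − 2/s)(1-s)^(n-K-1)`. -/
theorem stmt10 (K n : ℕ) (hK : 1 ≤ K) (hn : K + 2 ≤ n)
    (s : ℝ) (hs0 : 0 < s) (hs1 : s < 1) :
    0 < (∫ ω, (((Zset K n ω).card : ℝ)) ^ 2 ∂(prunMeasure K n s))
          - (∫ ω, ((Zset K n ω).card : ℝ) ∂(prunMeasure K n s)) ^ 2 ∧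
    (∫ ω, (((Zset K n ω).card : ℝ)) ^ 2 ∂(prunMeasure K n s))
          - (∫ ω, ((Zset K n ω).card : ℝ) ∂(prunMeasure K n s)) ^ 2
      < (8 / s ^ 2 - 2 / s) * (1 - s) ^ (n - K - 1) :=
  stmt10_general K n hn s hs0 hs1
end
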